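/- Let (V, E) be a loopless hypergraph: V a set and E a collection of subsets of V, each of cardinality at least 2. An anticlique is a subset of V that includes no member of E. For v ∈ V let v₊ be the set of all anticliques containing v. Then the family {v₊ : v ∈ V} is an ω-independent subset of the powerset Boolean algebra of the set of anticliques of (V, E). -/
import Mathlib


universe u

/-- `X` is ω-independent: `⊥ ∉ X`, (⊥1) no nonempty finite `F ⊆ X` has `sup F = ⊤`, and
(⊥3) if `⊥ ≠ inf F ≤ sup G` for nonempty finite `F, G ⊆ X` then `F ∩ G ≠ ∅`. -/
def OmegaIndependent {α : Type u} [BooleanAlgebra α] (X : Set α) : Prop :=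
  ⊥ ∉ X ∧
  (∀ F : Finset α, ↑F ⊆ X → F.Nonempty → F.sup id ≠ ⊤) ∧
  (∀ F G : Finset α, ↑F ⊆ X → ↑G ⊆ X → F.Nonempty → G.Nonempty →
    F.inf id ≠ ⊥ → F.inf id ≤ G.sup id → ((F : Set α) ∩ (G : Set α)).Nonempty)

/-- The anticliques of a hypergraph `(V, E)`: subsets of `V` including no hyperedge. -/
def Anticlique {V : Type u} (E : Set (Set V)) : Type u := {s : Set V // ∀ e ∈ E, ¬ e ⊆ s}

/-- `v₊` is the set of anticliques containing the vertex `v`. -/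
def vPlus {V : Type u} (E : Set (Set V)) (v : V) : Set (Anticlique E) :=
  {a : Anticlique E | v ∈ a.1}

/-- For a loopless hypergraph `(V, E)` (every hyperedge has at least two elements), the
family `{v₊ : v ∈ V}` is ω-independent in the powerset Boolean algebra of the set of
anticliques of `(V, E)`. -/
theorem vPlus_omegaIndependent {V : Type u} (E : Set (Set V))
    (hE : ∀ e ∈ E, e.Nontrivial) :
    OmegaIndependent (Set.range (vPlus E)) := by
  have hsingle : ∀ v : V, ∀ e ∈ E, ¬ e ⊆ ({v} : Set V) := by
    intro v e he hsub
    obtain ⟨a, ha, b, hb, hab⟩ := hE e he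
    have h1 := hsub ha; have h2 := hsub hb
    simp_all
  have hsub : ∀ (s t : Set V), s ⊆ t → (∀ e ∈ E, ¬ e ⊆ t) → ∀ e ∈ E, ¬ e ⊆ s :=
    fun s t hst ht e he hes => ht e he (hes.trans hst)
  refine ⟨?_, ?_, ?_⟩
  · rintro ⟨v, hv⟩
    have h : (⟨{v}, hsingle v⟩ : Anticlique E) ∈ vPlus E v := rfl
    rw [hv] at h
    exact h
  · intro F hF hFne htop
    have hmem : (⟨∅, fun e he h => (hE e he).nonempty.ne_empty
        (Set.subset_empty_iff.mp h)⟩ : Anticlique E) ∈ F.sup id := by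
      rw [htop]; trivial
    rw [Finset.sup_set_eq_biUnion] at hmem
    obtain ⟨x, hx, hmemx⟩ := Set.mem_iUnion₂.mp hmem
    obtain ⟨v, rfl⟩ := hF hx
    exact hmemx
  · intro F G hF hG hFne hGne hbot hle
    obtain ⟨a, ha⟩ := Set.nonempty_iff_ne_empty.mpr hbot
    set S : Set V := {v | vPlus E v ∈ F} ∩ a.1 with hS
    have hSanti : ∀ e ∈ E, ¬ e ⊆ S := hsub S a.1 Set.inter_subset_right a.2
    set b : Anticlique E := ⟨S, hSanti⟩
    have hbF : b ∈ F.inf id := by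
      rw [Finset.inf_set_eq_iInter]
      refine Set.mem_iInter₂.mpr fun x hx => ?_
      obtain ⟨v, rfl⟩ := hF hx
      have hav : a ∈ vPlus E v := by
        have hle' : F.inf id ≤ id (vPlus E v) := Finset.inf_le hx
        rw [Finset.inf_set_eq_iInter] at ha
        exact Set.mem_iInter₂.mp ha (vPlus E v) hx
      exact ⟨hx, hav⟩
    have hbG := hle hbF
    rw [Finset.sup_set_eq_biUnion] at hbG
    obtain ⟨g, hg, hbg⟩ := Set.mem_iUnion₂.mp hbG
    obtain ⟨w, rfl⟩ := hG hg
    exact ⟨vPlus E w, hbg.1, hg⟩
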